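/- Let k be a heat-kernel-type function satisfying |k(t,s,ξ,x)| ≤ M (t−s)^{−n/2} exp( −δ|ξ−x|²/(t−s) + δ̃(t−s) ) for ξ, x ∈ Ω̄ ⊂ ℝⁿ and 0 ≤ s < t ≤ τ, with M, δ > 0 and δ̃ ∈ ℝ. Let p,q ∈ (1,∞) with 1/p + 1/q = 1 and q > np/2. Then for the point-evaluation output (CU(t,s)φ := ∫_Ω k(t,s,c,x)φ(x)dx at a fixed point c ∈ Ω), there exists a constant γ > 0 such that for all φ ∈ L^q(Ω) and all 0 ≤ s < τ' < τ: ∫_s^{τ'} |∫_Ω k(t,s,c,x)φ(x) dx|^p dt ≤ γ^p ‖φ‖_{L^q(Ω)}^p. The proof uses Hölder's inequality ‖k(t,s,c,·)‖_{L^p(Ω)} ≤ C (t−s)^{−n/(2q)} and the integrability of (t−s)^{−np/(2q)} on (s,τ'), which holds since np/(2q) < 1. -/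

import Mathlib

/-!
Hölder's inequality bounds `|∫_Ω k(t,s,c,·) φ|^p` by `‖k(t,s,c,·)‖_p^p ‖φ‖_q^p`, and the Gaussian
bound on `k`, integrated over the whole space, gives `‖k(t,s,c,·)‖_p^p ≤ C (t-s)^(-n(p-1)/2)`.
Since `α = n(p-1)/2 = np/(2q) < 1`, this singularity is integrable at `t = s`, and
`∫_s^τ' (t-s)^(-α) dt ≤ τ^(1-α)/(1-α)` uniformly in `s < τ' < τ`.
-/

open MeasureTheory Set Real Module

theorem mul_exp_neg_mul_rpow {A : ℝ} (hA : 0 ≤ A) (b r p : ℝ) :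
    (A * exp (-b * r)) ^ p = A ^ p * exp (-(p * b) * r) := by
  rw [mul_rpow hA (exp_nonneg _), ← exp_mul]
  ring_nf

theorem abs_integral_mul_rpow_le_of_abs_le {α : Type*} [MeasurableSpace α] {μ : Measure α}
    {p q : ℝ} (hpq : p.HolderConjugate q) {f g φ : α → ℝ} (hfg : ∀ᵐ x ∂μ, |f x| ≤ g x)
    (hg : MemLp g (ENNReal.ofReal p) μ) (hφ : MemLp φ (ENNReal.ofReal q) μ) :
    |∫ x, f x * φ x ∂μ| ^ p ≤ (∫ x, g x ^ p ∂μ) * (∫ x, |φ x| ^ q ∂μ) ^ (p / q) := by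
  have := hpq.ennrealOfReal
  have hg_nonneg : 0 ≤ᵐ[μ] g := hfg.mono fun x hx => (abs_nonneg _).trans hx
  have h_dom : |∫ x, f x * φ x ∂μ| ≤ ∫ x, g x * |φ x| ∂μ :=
    norm_integral_le_of_norm_le (hg.integrable_mul hφ.abs) <| hfg.mono fun x hx => by
      rw [Real.norm_eq_abs, abs_mul]
      exact mul_le_mul_of_nonneg_right hx (abs_nonneg _)
  have h_holder := integral_mul_le_Lp_mul_Lq_of_nonneg hpq hg_nonneg
    (.of_forall fun x => abs_nonneg (φ x)) hg hφ.abs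
  have hGp : 0 ≤ ∫ x, g x ^ p ∂μ :=
    integral_nonneg_of_ae <| hg_nonneg.mono fun x hx => rpow_nonneg hx p
  have hΦ : 0 ≤ ∫ x, |φ x| ^ q ∂μ := integral_nonneg fun x => rpow_nonneg (abs_nonneg _) q
  calc |∫ x, f x * φ x ∂μ| ^ p
      ≤ ((∫ x, g x ^ p ∂μ) ^ (1 / p) * (∫ x, |φ x| ^ q ∂μ) ^ (1 / q)) ^ p :=
        rpow_le_rpow (abs_nonneg _) (h_dom.trans h_holder) hpq.nonneg
    _ = (∫ x, g x ^ p ∂μ) * (∫ x, |φ x| ^ q ∂μ) ^ (p / q) := by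
        rw [mul_rpow (rpow_nonneg hGp _) (rpow_nonneg hΦ _), ← rpow_mul hGp, ← rpow_mul hΦ,
          one_div_mul_cancel hpq.ne_zero, rpow_one, one_div_mul_eq_div]

theorem integrableOn_Ioc_sub_rpow_neg {α : ℝ} (hα : α < 1) (s T : ℝ) :
    IntegrableOn (fun t => (t - s) ^ (-α)) (Ioc s T) := by
  have h := (intervalIntegral.intervalIntegrable_rpow' (a := 0) (b := T - s)
    (by linarith : -1 < -α)).comp_sub_right s
  rw [zero_add, sub_add_cancel] at h
  exact h.1

theorem setIntegral_Ioc_sub_rpow_neg {α : ℝ} (hα : α < 1) {s T : ℝ} (hsT : s ≤ T) :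
    ∫ t in Ioc s T, (t - s) ^ (-α) = (T - s) ^ (1 - α) / (1 - α) := by
  rw [← intervalIntegral.integral_of_le hsT,
    intervalIntegral.integral_comp_sub_right (fun u => u ^ (-α)) s, sub_self,
    integral_rpow (.inl (by linarith)), zero_rpow (by linarith), neg_add_eq_sub]
  ring

theorem setIntegral_Ioc_le_of_le_mul_sub_rpow_neg {F : ℝ → ℝ} {K α s T : ℝ} (hα : α < 1)
    (hsT : s ≤ T) (hF_nonneg : ∀ t, 0 ≤ F t) (hF : ∀ t ∈ Ioc s T, F t ≤ K * (t - s) ^ (-α)) :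
    ∫ t in Ioc s T, F t ≤ K * ((T - s) ^ (1 - α) / (1 - α)) := by
  rw [← setIntegral_Ioc_sub_rpow_neg hα hsT, ← integral_const_mul]
  refine integral_mono_of_nonneg (.of_forall fun t => hF_nonneg t)
    ((integrableOn_Ioc_sub_rpow_neg hα s T).const_mul K) ?_
  exact (ae_restrict_mem measurableSet_Ioc).mono hF


section InnerProductSpace

variable {V : Type*} [NormedAddCommGroup V] [InnerProductSpace ℝ V] [FiniteDimensional ℝ V]
  [MeasurableSpace V] [BorelSpace V]

theorem integrable_exp_neg_mul_norm_sub_sq (c : V) {b : ℝ} (hb : 0 < b) :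
    Integrable fun x : V => exp (-b * ‖c - x‖ ^ 2) := by
  have h := (GaussianFourier.integrable_cexp_neg_mul_sq_norm_add (V := V)
    (b := (b : ℂ)) (by simpa using hb) 0 0).norm.comp_sub_left c
  refine h.congr (.of_forall fun x => ?_)
  simp [Complex.norm_exp, ← Complex.ofReal_pow]

theorem integral_exp_neg_mul_norm_sub_sq (c : V) {b : ℝ} (hb : 0 < b) :
    ∫ x : V, exp (-b * ‖c - x‖ ^ 2) = (π / b) ^ (finrank ℝ V / 2 : ℝ) := by
  rw [integral_sub_left_eq_self (fun x : V => exp (-b * ‖x‖ ^ 2)) volume c,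
    GaussianFourier.integral_rexp_neg_mul_sq_norm hb]

section

variable {A : ℝ} (hA : 0 ≤ A) (c : V) {b p : ℝ} (hb : 0 < b) (hp : 0 < p)
include hA hb hp

theorem integrable_mul_exp_neg_mul_norm_sub_sq_rpow :
    Integrable fun x : V => (A * exp (-b * ‖c - x‖ ^ 2)) ^ p := by
  simp_rw [mul_exp_neg_mul_rpow hA]
  exact (integrable_exp_neg_mul_norm_sub_sq c (mul_pos hp hb)).const_mul _

theorem memLp_mul_exp_neg_mul_norm_sub_sq :
    MemLp (fun x : V => A * exp (-b * ‖c - x‖ ^ 2)) (ENNReal.ofReal p) := by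
  rw [← integrable_norm_rpow_iff (by fun_prop) (by simpa using hp) ENNReal.ofReal_ne_top,
    ENNReal.toReal_ofReal hp.le]
  simp_rw [Real.norm_of_nonneg (mul_nonneg hA (exp_nonneg _))]
  exact integrable_mul_exp_neg_mul_norm_sub_sq_rpow hA c hb hp

theorem integral_mul_exp_neg_mul_norm_sub_sq_rpow :
    ∫ x : V, (A * exp (-b * ‖c - x‖ ^ 2)) ^ p = A ^ p * (π / (p * b)) ^ (finrank ℝ V / 2 : ℝ) := by
  simp_rw [mul_exp_neg_mul_rpow hA]
  rw [integral_const_mul, integral_exp_neg_mul_norm_sub_sq c (mul_pos hp hb)]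

end

theorem abs_setIntegral_mul_rpow_le_of_gaussian_bound {n : ℕ} (hV : finrank ℝ V = n)
    {Ω : Set V} {f φ : V → ℝ} {c : V} {p q M δ δ' d : ℝ} (hpq : p.HolderConjugate q)
    (hM : 0 ≤ M) (hδ : 0 < δ) (hd : 0 < d)
    (hf : ∀ x ∈ closure Ω, |f x| ≤
      M * d ^ (-(n : ℝ) / 2) * exp (-δ * ‖c - x‖ ^ 2 / d + δ' * d))
    (hφ : MemLp φ (ENNReal.ofReal q) (volume.restrict Ω)) :
    |∫ x in Ω, f x * φ x| ^ p ≤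
      M ^ p * exp (p * δ' * d) * (π / (p * δ)) ^ ((n : ℝ) / 2) * d ^ (-((n : ℝ) * (p - 1) / 2)) *
        (∫ x in Ω, |φ x| ^ q) ^ (p / q) := by
  subst hV
  have hp := hpq.pos
  set N : ℝ := (finrank ℝ V : ℝ)
  set A := M * d ^ (-N / 2) * exp (δ' * d) with hA_def
  have hA : 0 ≤ A := by positivity
  have hb : 0 < δ / d := div_pos hδ hd
  have hG : ∀ x, M * d ^ (-N / 2) * exp (-δ * ‖c - x‖ ^ 2 / d + δ' * d) =
      A * exp (-(δ / d) * ‖c - x‖ ^ 2) := fun x => by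
    rw [hA_def, add_comm, exp_add]; ring_nf
  -- `Ω` need not be measurable, but almost every point of it lies in the closed set `closure Ω`
  have hfΩ : ∀ᵐ x ∂volume.restrict Ω, |f x| ≤ A * exp (-(δ / d) * ‖c - x‖ ^ 2) :=
    (ae_restrict_of_ae_restrict_of_subset subset_closure
      (ae_restrict_mem isClosed_closure.measurableSet)).mono fun x hx => (hf x hx).trans_eq (hG x)
  have hΦ : 0 ≤ (∫ x in Ω, |φ x| ^ q) ^ (p / q) :=
    rpow_nonneg (integral_nonneg fun x => rpow_nonneg (abs_nonneg _) q) _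
  have hdpow : d ^ (-(N * (p - 1) / 2)) = d ^ (-N / 2 * p) * d ^ (N / 2) := by
    rw [← rpow_add hd]; ring_nf
  calc |∫ x in Ω, f x * φ x| ^ p
      ≤ (∫ x in Ω, (A * exp (-(δ / d) * ‖c - x‖ ^ 2)) ^ p) * (∫ x in Ω, |φ x| ^ q) ^ (p / q) :=
        abs_integral_mul_rpow_le_of_abs_le hpq hfΩ
          ((memLp_mul_exp_neg_mul_norm_sub_sq hA c hb hp).restrict Ω) hφ
    _ ≤ (∫ x, (A * exp (-(δ / d) * ‖c - x‖ ^ 2)) ^ p) * (∫ x in Ω, |φ x| ^ q) ^ (p / q) := by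
        refine mul_le_mul_of_nonneg_right (setIntegral_le_integral ?_ ?_) hΦ
        · exact integrable_mul_exp_neg_mul_norm_sub_sq_rpow hA c hb hp
        · exact .of_forall fun x => rpow_nonneg (by positivity) p
    _ = A ^ p * ((π / (p * δ)) ^ (N / 2) * d ^ (N / 2)) * (∫ x in Ω, |φ x| ^ q) ^ (p / q) := by
        rw [integral_mul_exp_neg_mul_norm_sub_sq_rpow hA c hb hp, ← mul_rpow (by positivity) hd.le]
        congr 3
        field_simp
    _ = _ := by
        rw [hA_def, mul_rpow (by positivity) (exp_nonneg _), mul_rpow hM (by positivity),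
          ← rpow_mul hd.le, ← exp_mul, hdpow]
        ring_nf

end InnerProductSpace

theorem stmt13_general (n : ℕ)
    (Ω : Set (EuclideanSpace ℝ (Fin n)))
    (τ M δ δ' : ℝ) (hτ : 0 < τ) (hM : 0 < M) (hδ : 0 < δ)
    (k : ℝ → ℝ → EuclideanSpace ℝ (Fin n) → EuclideanSpace ℝ (Fin n) → ℝ)
    (hk : ∀ s t : ℝ, 0 ≤ s → s < t → t ≤ τ →
      ∀ ξ ∈ closure Ω, ∀ x ∈ closure Ω,
        |k t s ξ x| ≤ M * (t - s) ^ (-(n : ℝ) / 2) *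
          Real.exp (-δ * ‖ξ - x‖ ^ 2 / (t - s) + δ' * (t - s)))
    (p q : ℝ) (hp : 1 < p) (hpq : 1 / p + 1 / q = 1)
    (hqnp : (n : ℝ) * p / 2 < q)
    (c₀ : EuclideanSpace ℝ (Fin n)) (hc₀ : c₀ ∈ Ω) :
    ∃ γ > (0 : ℝ), ∀ φ : EuclideanSpace ℝ (Fin n) → ℝ,
      MemLp φ (ENNReal.ofReal q) (volume.restrict Ω) →
      ∀ s τ' : ℝ, 0 ≤ s → s < τ' → τ' < τ →
        ∫ t in Ioc s τ', |∫ x in Ω, k t s c₀ x * φ x| ^ p ≤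
          γ ^ p * (∫ x in Ω, |φ x| ^ q) ^ (p / q) := by
  have hpq' : p.HolderConjugate q := holderConjugate_iff.mpr ⟨hp, by simpa only [one_div] using hpq⟩
  set α := (n : ℝ) * (p - 1) / 2
  have hα : α < 1 := by
    have hq := hpq'.symm.pos
    have hαq : α * q = n * p / 2 := by rw [← hpq'.sub_one_mul_conj]; ring
    nlinarith
  set P := (π / (p * δ)) ^ ((n : ℝ) / 2)
  set C := M ^ p * exp (p * |δ'| * τ) * P
  have hγp : 0 < C * τ ^ (1 - α) / (1 - α) := by
    have : 0 < 1 - α := by linarith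
    positivity
  refine ⟨(C * τ ^ (1 - α) / (1 - α)) ^ (1 / p), by positivity, fun φ hφ s τ' hs hsτ' hτ'τ => ?_⟩
  set Φ := (∫ x in Ω, |φ x| ^ q) ^ (p / q)
  have hpoint : ∀ t ∈ Ioc s τ', |∫ x in Ω, k t s c₀ x * φ x| ^ p ≤ C * Φ * (t - s) ^ (-α) := by
    rintro t ⟨hst, htτ'⟩
    have h := abs_setIntegral_mul_rpow_le_of_gaussian_bound finrank_euclideanSpace_fin hpq' hM.le
      hδ (sub_pos.2 hst) (hk s t hs hst (by linarith) c₀ (subset_closure hc₀)) hφ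
    calc _ ≤ M ^ p * exp (p * δ' * (t - s)) * P * (t - s) ^ (-α) * Φ := h
      _ ≤ M ^ p * exp (p * |δ'| * τ) * P * (t - s) ^ (-α) * Φ := by
        gcongr M ^ p * exp ?_ * _ * _ * _
        calc p * δ' * (t - s) ≤ p * |δ'| * (t - s) := by gcongr; exact le_abs_self _
          _ ≤ p * |δ'| * τ := by gcongr; linarith
      _ = C * Φ * (t - s) ^ (-α) := by ring
  calc ∫ t in Ioc s τ', |∫ x in Ω, k t s c₀ x * φ x| ^ p
      ≤ C * Φ * ((τ' - s) ^ (1 - α) / (1 - α)) :=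
        setIntegral_Ioc_le_of_le_mul_sub_rpow_neg hα hsτ'.le (fun t => by positivity) hpoint
    _ ≤ C * Φ * (τ ^ (1 - α) / (1 - α)) := by gcongr; linarith
    _ = ((C * τ ^ (1 - α) / (1 - α)) ^ (1 / p)) ^ p * Φ := by
        rw [← rpow_mul hγp.le, one_div_mul_cancel hpq'.ne_zero, rpow_one]; ring

/-- `L^p`-admissibility of the point observation for an evolution family given
by a kernel with a Gaussian upper bound: there is `γ > 0` such that
`∫_s^{τ'} |(CU(t,s)φ)(c₀)|^p dt ≤ γ^p ‖φ‖_{L^q}^p` whenever `q > np/2`. -/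
theorem stmt13 (n : ℕ) (hn : 0 < n)
    (Ω : Set (EuclideanSpace ℝ (Fin n))) (hΩo : IsOpen Ω)
    (hΩb : Bornology.IsBounded Ω)
    (τ M δ δ' : ℝ) (hτ : 0 < τ) (hM : 0 < M) (hδ : 0 < δ)
    (k : ℝ → ℝ → EuclideanSpace ℝ (Fin n) → EuclideanSpace ℝ (Fin n) → ℝ)
    (hk : ∀ s t : ℝ, 0 ≤ s → s < t → t ≤ τ →
      ∀ ξ ∈ closure Ω, ∀ x ∈ closure Ω,
        |k t s ξ x| ≤ M * (t - s) ^ (-(n : ℝ) / 2) *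
          Real.exp (-δ * ‖ξ - x‖ ^ 2 / (t - s) + δ' * (t - s)))
    (p q : ℝ) (hp : 1 < p) (hq : 1 < q) (hpq : 1 / p + 1 / q = 1)
    (hqnp : (n : ℝ) * p / 2 < q)
    (c₀ : EuclideanSpace ℝ (Fin n)) (hc₀ : c₀ ∈ Ω) :
    ∃ γ > (0 : ℝ), ∀ φ : EuclideanSpace ℝ (Fin n) → ℝ,
      MemLp φ (ENNReal.ofReal q) (volume.restrict Ω) →
      ∀ s τ' : ℝ, 0 ≤ s → s < τ' → τ' < τ →
        ∫ t in Ioc s τ', |∫ x in Ω, k t s c₀ x * φ x| ^ p ≤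
          γ ^ p * (∫ x in Ω, |φ x| ^ q) ^ (p / q) :=
  stmt13_general n Ω τ M δ δ' hτ hM hδ k hk p q hp hpq hqnp c₀ hc₀
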